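/- arXiv:2007.06697 — 2 statements merged into one kernel-verified Lean document; each statement's English description precedes it below -/
import Mathlib

section
/- For every natural number I ≥ 3 and all real numbers x, y with 1/I ≤ x ≤ 1, 1/I ≤ y ≤ 1, and min(x,y) ≤ 1/2, one has ((I−2)/I)·(x·(1−y) + (1−x)·y) − (2·(I−2)/(I·(I−1)))·(1−x)·(1−y) ≥ (1/4)·min(x − 1/I, y − 1/I). -/
/-!
The expression is symmetric in `x, y` and affine in each variable. For `x ≤ 1/2` its slope in `y`
is nonnegative, so with `x = min x y` it is bounded below by its value on the diagonal, which
factors as `2 (I - 2) / (I (I - 1)) · (1 - x) (I x - 1)`. Since `1 - x ≥ 1/2` and `I ≥ 3`, this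
is at least `(I x - 1) / (4 I) = (x - 1/I) / 4`.
-/

noncomputable def balancedF (n x y : ℝ) : ℝ :=
  (n - 2) / n * (x * (1 - y) + (1 - x) * y) - 2 * (n - 2) / (n * (n - 1)) * (1 - x) * (1 - y)

lemma balancedF_comm (n x y : ℝ) : balancedF n x y = balancedF n y x := by
  unfold balancedF
  ring

lemma balancedF_sub_diag (n x y : ℝ) :
    balancedF n x y - balancedF n x x =
      (y - x) * ((n - 2) / n * (1 - 2 * x) + 2 * (n - 2) / (n * (n - 1)) * (1 - x)) := by
  unfold balancedF
  ring

lemma balancedF_diag {n : ℝ} (hn : n ≠ 1) (x : ℝ) :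
    balancedF n x x = 2 * (n - 2) / (n * (n - 1)) * (1 - x) * (n * x - 1) := by
  have hn1 : n - 1 ≠ 0 := sub_ne_zero.mpr hn
  unfold balancedF
  field_simp
  ring

lemma balancedF_diag_le {n x y : ℝ} (hn : 2 ≤ n) (hxy : x ≤ y) (hx : x ≤ 1 / 2) :
    balancedF n x x ≤ balancedF n x y := by
  have hn2 : 0 ≤ n - 2 := sub_nonneg.mpr hn
  rw [← sub_nonneg, balancedF_sub_diag]
  refine mul_nonneg (sub_nonneg.mpr hxy) (add_nonneg ?_ ?_)
  · exact mul_nonneg (div_nonneg hn2 (by linarith)) (by linarith)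
  · exact mul_nonneg (div_nonneg (by linarith) (by nlinarith)) (by linarith)

lemma quarter_sub_inv_le_balancedF_diag {n x : ℝ} (hn : 3 ≤ n) (hx1 : 1 / n ≤ x)
    (hx : x ≤ 1 / 2) : 1 / 4 * (x - 1 / n) ≤ balancedF n x x := by
  have hn0 : 0 < n := by linarith
  have hnx : 0 ≤ n * x - 1 := by
    rw [div_le_iff₀ hn0] at hx1
    linarith
  rw [balancedF_diag (by linarith)]
  calc 1 / 4 * (x - 1 / n) = (n * x - 1) * (1 / (4 * n)) := by field_simp
    _ ≤ (n * x - 1) * (2 * (n - 2) * (1 - x) / (n * (n - 1))) := by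
      refine mul_le_mul_of_nonneg_left ?_ hnx
      rw [div_le_div_iff₀ (by positivity) (by nlinarith)]
      nlinarith [mul_nonneg (mul_nonneg hn0.le (by linarith : (0 : ℝ) ≤ n - 2))
        (by linarith : (0 : ℝ) ≤ 1 / 2 - x)]
    _ = 2 * (n - 2) / (n * (n - 1)) * (1 - x) * (n * x - 1) := by ring

lemma quarter_sub_inv_le_balancedF {n x y : ℝ} (hn : 3 ≤ n) (hx1 : 1 / n ≤ x) (hxy : x ≤ y)
    (hx : x ≤ 1 / 2) : 1 / 4 * (x - 1 / n) ≤ balancedF n x y :=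
  (quarter_sub_inv_le_balancedF_diag hn hx1 hx).trans (balancedF_diag_le (by linarith) hxy hx)

theorem balanced_F_difference_general (I : ℕ) (hI : 3 ≤ I) (x y : ℝ)
    (hx1 : 1 / (I : ℝ) ≤ x)
    (hy1 : 1 / (I : ℝ) ≤ y)
    (hmin : min x y ≤ 1/2) :
    ((I : ℝ) - 2) / I * (x * (1 - y) + (1 - x) * y)
      - 2 * ((I : ℝ) - 2) / ((I : ℝ) * ((I : ℝ) - 1)) * (1 - x) * (1 - y)
      ≥ (1/4) * min (x - 1 / (I : ℝ)) (y - 1 / (I : ℝ)) := by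
  have hn : (3 : ℝ) ≤ I := by exact_mod_cast hI
  change balancedF I x y ≥ _
  rcases le_total x y with hxy | hyx
  · rw [min_eq_left (sub_le_sub_right hxy _)]
    exact quarter_sub_inv_le_balancedF hn hx1 hxy (min_eq_left hxy ▸ hmin)
  · rw [min_eq_right (sub_le_sub_right hyx _), balancedF_comm]
    exact quarter_sub_inv_le_balancedF hn hy1 hyx (min_eq_right hyx ▸ hmin)

/-- Part (d) of the lemma bounding differences of ancestral-configuration
probabilities in the balanced quartet case: for `I ≥ 3`, `x, y ∈ [1/I, 1]`
with `min x y ≤ 1/2`, the combination of `F` event probabilities is at least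
`(1/4)·min (x − 1/I) (y − 1/I)`. -/
theorem balanced_F_difference (I : ℕ) (hI : 3 ≤ I) (x y : ℝ)
    (hx1 : 1 / (I : ℝ) ≤ x) (hx2 : x ≤ 1)
    (hy1 : 1 / (I : ℝ) ≤ y) (hy2 : y ≤ 1)
    (hmin : min x y ≤ 1/2) :
    ((I : ℝ) - 2) / I * (x * (1 - y) + (1 - x) * y)
      - 2 * ((I : ℝ) - 2) / ((I : ℝ) * ((I : ℝ) - 1)) * (1 - x) * (1 - y)
      ≥ (1/4) * min (x - 1 / (I : ℝ)) (y - 1 / (I : ℝ)) :=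
  balanced_F_difference_general I hI x y hx1 hy1 hmin
end

section
/- For every natural number I ≥ 2 and all real numbers x, y with 1/I ≤ x ≤ 1 and 1/I ≤ y ≤ 1, one has ((I−2)/I)·(x·(1−y) + (1−x)·y) − (2·(I−2)/(I·(I−1)))·(1−x)·(1−y) ≥ ((I−2)/(I·(I−1)))·(1 − min(x,y))·(I·max(x,y) − 1). -/
/-! Both sides are symmetric in `x, y`. For `a = min x y` and `b = max x y` their difference
factors as `(I - 2) (1 - b) (I a - 1) / (I (I - 1))`, and each factor is nonnegative on the
given range. -/

lemma balanced_gap_eq (n a b : ℝ) (hn : n ≠ 0) (hn1 : n - 1 ≠ 0) :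
    (n - 2) / n * (a * (1 - b) + (1 - a) * b) - 2 * (n - 2) / (n * (n - 1)) * (1 - a) * (1 - b)
      - (n - 2) / (n * (n - 1)) * (1 - a) * (n * b - 1)
      = (n - 2) * (1 - b) * (n * a - 1) / (n * (n - 1)) := by
  field_simp
  ring

lemma balanced_gap_nonneg (n a b : ℝ) (hn : 2 ≤ n) (ha : 1 ≤ n * a) (hb : b ≤ 1) :
    (n - 2) / (n * (n - 1)) * (1 - a) * (n * b - 1)
      ≤ (n - 2) / n * (a * (1 - b) + (1 - a) * b)
        - 2 * (n - 2) / (n * (n - 1)) * (1 - a) * (1 - b) := by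
  have hgap := balanced_gap_eq n a b (by linarith) (by linarith)
  have : 0 ≤ (n - 2) * (1 - b) * (n * a - 1) / (n * (n - 1)) :=
    div_nonneg (mul_nonneg (mul_nonneg (by linarith) (by linarith)) (by linarith))
      (mul_nonneg (by linarith) (by linarith))
  linarith

/-- Intermediate inequality in the proof of the lemma comparing
ancestral-configuration probabilities in the balanced quartet case: for
`I ≥ 2` and `x, y ∈ [1/I, 1]`. -/
theorem balanced_F_intermediate (I : ℕ) (hI : 2 ≤ I) (x y : ℝ)
    (hx1 : 1 / (I : ℝ) ≤ x) (hx2 : x ≤ 1)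
    (hy1 : 1 / (I : ℝ) ≤ y) (hy2 : y ≤ 1) :
    ((I : ℝ) - 2) / I * (x * (1 - y) + (1 - x) * y)
      - 2 * ((I : ℝ) - 2) / ((I : ℝ) * ((I : ℝ) - 1)) * (1 - x) * (1 - y)
      ≥ ((I : ℝ) - 2) / ((I : ℝ) * ((I : ℝ) - 1))
          * (1 - min x y) * ((I : ℝ) * max x y - 1) := by
  have hI' : (2 : ℝ) ≤ I := by exact_mod_cast hI
  have hIpos : (0 : ℝ) < I := by linarith
  have hIx : 1 ≤ (I : ℝ) * x := by rwa [div_le_iff₀' hIpos] at hx1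
  have hIy : 1 ≤ (I : ℝ) * y := by rwa [div_le_iff₀' hIpos] at hy1
  rcases le_total x y with hxy | hyx
  · rw [min_eq_left hxy, max_eq_right hxy]
    exact balanced_gap_nonneg I x y hI' hIx hy2
  · rw [min_eq_right hyx, max_eq_left hyx]
    linear_combination balanced_gap_nonneg I y x hI' hIy hx2
end
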